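/- Let L : ℝ⁴ → ℝ⁴ be a linear map preserving the Minkowski bilinear form (⟨Lx, Ly⟩ = ⟨x,y⟩ for all x, y) which is time-orientation preserving, i.e. (L(1,0,0,0))₀ > 0. Then there exists an isometry β of Euclidean ℝ³ such that for every x ∈ S³₁,₊ with (Lx)₀ > 0, one has p₂Φ(x, Lx) = β(p₁Φ(x, Lx)). -/

import Mathlib

noncomputable section

/-- The Minkowski bilinear form on `ℝ⁴`. -/
def mink (x y : Fin 4 → ℝ) : ℝ :=
  -(x 0 * y 0) + x 1 * y 1 + x 2 * y 2 + x 3 * y 3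

/-- The projective (Klein) map `p(x) = (x₁, x₂, x₃)/x₀`. -/
def projMap (x : Fin 4 → ℝ) : EuclideanSpace ℝ (Fin 3) :=
  !₂[x 1 / x 0, x 2 / x 0, x 3 / x 0]

/-- First component `p₁ ∘ Φ` of the Pogorelov map:
`Φ(x,y) = (2(x₁,x₂,x₃)/(x₀+y₀), 2(y₁,y₂,y₃)/(x₀+y₀))`. -/
def phi1 (x y : Fin 4 → ℝ) : EuclideanSpace ℝ (Fin 3) :=
  !₂[2 * x 1 / (x 0 + y 0), 2 * x 2 / (x 0 + y 0), 2 * x 3 / (x 0 + y 0)]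

/-- Second component `p₂ ∘ Φ` of the Pogorelov map. -/
def phi2 (x y : Fin 4 → ℝ) : EuclideanSpace ℝ (Fin 3) :=
  !₂[2 * y 1 / (x 0 + y 0), 2 * y 2 / (x 0 + y 0), 2 * y 3 / (x 0 + y 0)]

def auxLin (m00 m01 m02 m10 m11 m12 m20 m21 m22 : ℝ) :
    EuclideanSpace ℝ (Fin 3) →ₗ[ℝ] EuclideanSpace ℝ (Fin 3) where
  toFun u := WithLp.toLp 2 (![m00 * u 0 + m01 * u 1 + m02 * u 2,
               m10 * u 0 + m11 * u 1 + m12 * u 2,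
               m20 * u 0 + m21 * u 1 + m22 * u 2] : Fin 3 → ℝ)
  map_add' u v := by
    ext i; fin_cases i <;>
      simp [PiLp.add_apply] <;> ring
  map_smul' r u := by
    ext i; fin_cases i <;>
      simp [PiLp.smul_apply, smul_eq_mul] <;> ring

lemma auxLin_norm (m00 m01 m02 m10 m11 m12 m20 m21 m22 : ℝ)
    (h1 : m00^2 + m10^2 + m20^2 = 1)
    (h2 : m01^2 + m11^2 + m21^2 = 1)
    (h3 : m02^2 + m12^2 + m22^2 = 1)
    (h4 : m00*m01 + m10*m11 + m20*m21 = 0)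
    (h5 : m00*m02 + m10*m12 + m20*m22 = 0)
    (h6 : m01*m02 + m11*m12 + m21*m22 = 0)
    (u : EuclideanSpace ℝ (Fin 3)) :
    ‖auxLin m00 m01 m02 m10 m11 m12 m20 m21 m22 u‖ = ‖u‖ := by
  rw [EuclideanSpace.norm_eq, EuclideanSpace.norm_eq]
  congr 1
  rw [Fin.sum_univ_three, Fin.sum_univ_three]
  simp only [auxLin, LinearMap.coe_mk, AddHom.coe_mk, Real.norm_eq_abs, sq_abs, PiLp.toLp_apply,
    Matrix.cons_val_zero, Matrix.cons_val_one, Matrix.head_cons, Matrix.cons_val_two,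
    Matrix.tail_cons]
  linear_combination (u 0)^2*h1 + (u 1)^2*h2 + (u 2)^2*h3 +
    2*(u 0)*(u 1)*h4 + 2*(u 0)*(u 2)*h5 + 2*(u 1)*(u 2)*h6

def transIso (w : EuclideanSpace ℝ (Fin 3)) :
    EuclideanSpace ℝ (Fin 3) ≃ᵢ EuclideanSpace ℝ (Fin 3) where
  toFun v := v + w
  invFun v := v - w
  left_inv v := add_sub_cancel_right v w
  right_inv v := sub_add_cancel v w
  isometry_toFun := Isometry.of_dist_eq fun a b => dist_add_right a b w

set_option maxHeartbeats 2000000 in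
/-- For a time-orientation preserving linear map `L` of `ℝ⁴` preserving the
Minkowski form, there is a Euclidean isometry `β` of `ℝ³` with
`p₂Φ(x, Lx) = β (p₁Φ(x, Lx))` for all `x ∈ S³₁,₊` with `(Lx)₀ > 0`. -/
theorem pogorelov_conjugates_isometries (L : (Fin 4 → ℝ) →ₗ[ℝ] (Fin 4 → ℝ))
    (hL : ∀ x y, mink (L x) (L y) = mink x y)
    (hT : 0 < L ![1, 0, 0, 0] 0) :
    ∃ β : EuclideanSpace ℝ (Fin 3) ≃ᵢ EuclideanSpace ℝ (Fin 3),
      ∀ x : Fin 4 → ℝ, mink x x = 1 → 0 < x 0 → 0 < L x 0 →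
        phi2 x (L x) = β (phi1 x (L x)) := by
  have hexp : ∀ (x : Fin 4 → ℝ) (i : Fin 4),
      L x i = x 0 * L ![(1:ℝ),0,0,0] i + x 1 * L ![(0:ℝ),1,0,0] i
        + x 2 * L ![(0:ℝ),0,1,0] i + x 3 * L ![(0:ℝ),0,0,1] i := by
    intro x i
    have hx : x = x 0 • ![(1:ℝ),0,0,0] + x 1 • ![(0:ℝ),1,0,0] + x 2 • ![(0:ℝ),0,1,0] + x 3 • ![(0:ℝ),0,0,1] := by
      funext j; fin_cases j <;> simp
    conv_lhs => rw [hx]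
    simp only [map_add, map_smul, Pi.add_apply, Pi.smul_apply, smul_eq_mul]
  have q00 := hL ![(1:ℝ),0,0,0] ![(1:ℝ),0,0,0]
  have q01 := hL ![(1:ℝ),0,0,0] ![(0:ℝ),1,0,0]
  have q02 := hL ![(1:ℝ),0,0,0] ![(0:ℝ),0,1,0]
  have q03 := hL ![(1:ℝ),0,0,0] ![(0:ℝ),0,0,1]
  have q11 := hL ![(0:ℝ),1,0,0] ![(0:ℝ),1,0,0]
  have q12 := hL ![(0:ℝ),1,0,0] ![(0:ℝ),0,1,0]
  have q13 := hL ![(0:ℝ),1,0,0] ![(0:ℝ),0,0,1]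
  have q22 := hL ![(0:ℝ),0,1,0] ![(0:ℝ),0,1,0]
  have q23 := hL ![(0:ℝ),0,1,0] ![(0:ℝ),0,0,1]
  have q33 := hL ![(0:ℝ),0,0,1] ![(0:ℝ),0,0,1]
  simp only [mink, Matrix.cons_val] at q00 q01 q02 q03 q11 q12 q13 q22 q23 q33
  norm_num at q00 q01 q02 q03 q11 q12 q13 q22 q23 q33
  have hT' : 0 < L ![(1:ℝ),0,0,0] 0 := hT
  have hd : (0:ℝ) < (1 + L ![(1:ℝ),0,0,0] 0) := by linarith
  have hd' : (1 + L ![(1:ℝ),0,0,0] 0) ≠ 0 := ne_of_gt hd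
  have k00 : (L ![(0:ℝ),1,0,0] 1 - L ![(1:ℝ),0,0,0] 1 * L ![(0:ℝ),1,0,0] 0 / (1 + L ![(1:ℝ),0,0,0] 0))^2 + (L ![(0:ℝ),1,0,0] 2 - L ![(1:ℝ),0,0,0] 2 * L ![(0:ℝ),1,0,0] 0 / (1 + L ![(1:ℝ),0,0,0] 0))^2 + (L ![(0:ℝ),1,0,0] 3 - L ![(1:ℝ),0,0,0] 3 * L ![(0:ℝ),1,0,0] 0 / (1 + L ![(1:ℝ),0,0,0] 0))^2 = 1 := by
    field_simp
    linear_combination ((1 + L ![(1:ℝ),0,0,0] 0)^2) * q11 + (-2*(1 + L ![(1:ℝ),0,0,0] 0)*L ![(0:ℝ),1,0,0] 0) * q01 + (L ![(0:ℝ),1,0,0] 0^2) * q00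
  have k11 : (L ![(0:ℝ),0,1,0] 1 - L ![(1:ℝ),0,0,0] 1 * L ![(0:ℝ),0,1,0] 0 / (1 + L ![(1:ℝ),0,0,0] 0))^2 + (L ![(0:ℝ),0,1,0] 2 - L ![(1:ℝ),0,0,0] 2 * L ![(0:ℝ),0,1,0] 0 / (1 + L ![(1:ℝ),0,0,0] 0))^2 + (L ![(0:ℝ),0,1,0] 3 - L ![(1:ℝ),0,0,0] 3 * L ![(0:ℝ),0,1,0] 0 / (1 + L ![(1:ℝ),0,0,0] 0))^2 = 1 := by
    field_simp
    linear_combination ((1 + L ![(1:ℝ),0,0,0] 0)^2) * q22 + (-2*(1 + L ![(1:ℝ),0,0,0] 0)*L ![(0:ℝ),0,1,0] 0) * q02 + (L ![(0:ℝ),0,1,0] 0^2) * q00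
  have k22 : (L ![(0:ℝ),0,0,1] 1 - L ![(1:ℝ),0,0,0] 1 * L ![(0:ℝ),0,0,1] 0 / (1 + L ![(1:ℝ),0,0,0] 0))^2 + (L ![(0:ℝ),0,0,1] 2 - L ![(1:ℝ),0,0,0] 2 * L ![(0:ℝ),0,0,1] 0 / (1 + L ![(1:ℝ),0,0,0] 0))^2 + (L ![(0:ℝ),0,0,1] 3 - L ![(1:ℝ),0,0,0] 3 * L ![(0:ℝ),0,0,1] 0 / (1 + L ![(1:ℝ),0,0,0] 0))^2 = 1 := by
    field_simp
    linear_combination ((1 + L ![(1:ℝ),0,0,0] 0)^2) * q33 + (-2*(1 + L ![(1:ℝ),0,0,0] 0)*L ![(0:ℝ),0,0,1] 0) * q03 + (L ![(0:ℝ),0,0,1] 0^2) * q00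
  have k01 : (L ![(0:ℝ),1,0,0] 1 - L ![(1:ℝ),0,0,0] 1 * L ![(0:ℝ),1,0,0] 0 / (1 + L ![(1:ℝ),0,0,0] 0)) * (L ![(0:ℝ),0,1,0] 1 - L ![(1:ℝ),0,0,0] 1 * L ![(0:ℝ),0,1,0] 0 / (1 + L ![(1:ℝ),0,0,0] 0)) + (L ![(0:ℝ),1,0,0] 2 - L ![(1:ℝ),0,0,0] 2 * L ![(0:ℝ),1,0,0] 0 / (1 + L ![(1:ℝ),0,0,0] 0)) * (L ![(0:ℝ),0,1,0] 2 - L ![(1:ℝ),0,0,0] 2 * L ![(0:ℝ),0,1,0] 0 / (1 + L ![(1:ℝ),0,0,0] 0)) + (L ![(0:ℝ),1,0,0] 3 - L ![(1:ℝ),0,0,0] 3 * L ![(0:ℝ),1,0,0] 0 / (1 + L ![(1:ℝ),0,0,0] 0)) * (L ![(0:ℝ),0,1,0] 3 - L ![(1:ℝ),0,0,0] 3 * L ![(0:ℝ),0,1,0] 0 / (1 + L ![(1:ℝ),0,0,0] 0)) = 0 := by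
    field_simp
    linear_combination ((1 + L ![(1:ℝ),0,0,0] 0)^2) * q12 + (-(1 + L ![(1:ℝ),0,0,0] 0)*L ![(0:ℝ),0,1,0] 0) * q01 + (-(1 + L ![(1:ℝ),0,0,0] 0)*L ![(0:ℝ),1,0,0] 0) * q02 + (L ![(0:ℝ),1,0,0] 0*L ![(0:ℝ),0,1,0] 0) * q00
  have k02 : (L ![(0:ℝ),1,0,0] 1 - L ![(1:ℝ),0,0,0] 1 * L ![(0:ℝ),1,0,0] 0 / (1 + L ![(1:ℝ),0,0,0] 0)) * (L ![(0:ℝ),0,0,1] 1 - L ![(1:ℝ),0,0,0] 1 * L ![(0:ℝ),0,0,1] 0 / (1 + L ![(1:ℝ),0,0,0] 0)) + (L ![(0:ℝ),1,0,0] 2 - L ![(1:ℝ),0,0,0] 2 * L ![(0:ℝ),1,0,0] 0 / (1 + L ![(1:ℝ),0,0,0] 0)) * (L ![(0:ℝ),0,0,1] 2 - L ![(1:ℝ),0,0,0] 2 * L ![(0:ℝ),0,0,1] 0 / (1 + L ![(1:ℝ),0,0,0] 0)) + (L ![(0:ℝ),1,0,0] 3 - L ![(1:ℝ),0,0,0]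 3 * L ![(0:ℝ),1,0,0] 0 / (1 + L ![(1:ℝ),0,0,0] 0)) * (L ![(0:ℝ),0,0,1] 3 - L ![(1:ℝ),0,0,0] 3 * L ![(0:ℝ),0,0,1] 0 / (1 + L ![(1:ℝ),0,0,0] 0)) = 0 := by
    field_simp
    linear_combination ((1 + L ![(1:ℝ),0,0,0] 0)^2) * q13 + (-(1 + L ![(1:ℝ),0,0,0] 0)*L ![(0:ℝ),0,0,1] 0) * q01 + (-(1 + L ![(1:ℝ),0,0,0] 0)*L ![(0:ℝ),1,0,0] 0) * q03 + (L ![(0:ℝ),1,0,0] 0*L ![(0:ℝ),0,0,1] 0) * q00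
  have k12 : (L ![(0:ℝ),0,1,0] 1 - L ![(1:ℝ),0,0,0] 1 * L ![(0:ℝ),0,1,0] 0 / (1 + L ![(1:ℝ),0,0,0] 0)) * (L ![(0:ℝ),0,0,1] 1 - L ![(1:ℝ),0,0,0] 1 * L ![(0:ℝ),0,0,1] 0 / (1 + L ![(1:ℝ),0,0,0] 0)) + (L ![(0:ℝ),0,1,0] 2 - L ![(1:ℝ),0,0,0] 2 * L ![(0:ℝ),0,1,0] 0 / (1 + L ![(1:ℝ),0,0,0] 0)) * (L ![(0:ℝ),0,0,1] 2 - L ![(1:ℝ),0,0,0] 2 * L ![(0:ℝ),0,0,1] 0 / (1 + L ![(1:ℝ),0,0,0] 0)) + (L ![(0:ℝ),0,1,0] 3 - L ![(1:ℝ),0,0,0] 3 * L ![(0:ℝ),0,1,0] 0 / (1 + L ![(1:ℝ),0,0,0] 0)) * (L ![(0:ℝ),0,0,1] 3 - L ![(1:ℝ),0,0,0] 3 * L ![(0:ℝ),0,0,1] 0 / (1 + L ![(1:ℝ),0,0,0] 0)) = 0 := by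
    field_simp
    linear_combination ((1 + L ![(1:ℝ),0,0,0] 0)^2) * q23 + (-(1 + L ![(1:ℝ),0,0,0] 0)*L ![(0:ℝ),0,0,1] 0) * q02 + (-(1 + L ![(1:ℝ),0,0,0] 0)*L ![(0:ℝ),0,1,0] 0) * q03 + (L ![(0:ℝ),0,1,0] 0*L ![(0:ℝ),0,0,1] 0) * q00
  have hn : ∀ u, ‖auxLin (L ![(0:ℝ),1,0,0] 1 - L ![(1:ℝ),0,0,0] 1 * L ![(0:ℝ),1,0,0] 0 / (1 + L ![(1:ℝ),0,0,0] 0)) (L ![(0:ℝ),0,1,0] 1 - L ![(1:ℝ),0,0,0] 1 * L ![(0:ℝ),0,1,0] 0 / (1 + L ![(1:ℝ),0,0,0] 0)) (L ![(0:ℝ),0,0,1] 1 - L ![(1:ℝ),0,0,0] 1 * L ![(0:ℝ),0,0,1] 0 / (1 + L ![(1:ℝ),0,0,0] 0)) (L ![(0:ℝ),1,0,0] 2 - L ![(1:ℝ),0,0,0] 2 * L ![(0:ℝ),1,0,0] 0 / (1 + L ![(1:ℝ),0,0,0] 0)) (L ![(0:ℝ),0,1,0] 2 - L ![(1:ℝ),0,0,0]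 2 * L ![(0:ℝ),0,1,0] 0 / (1 + L ![(1:ℝ),0,0,0] 0)) (L ![(0:ℝ),0,0,1] 2 - L ![(1:ℝ),0,0,0] 2 * L ![(0:ℝ),0,0,1] 0 / (1 + L ![(1:ℝ),0,0,0] 0)) (L ![(0:ℝ),1,0,0] 3 - L ![(1:ℝ),0,0,0] 3 * L ![(0:ℝ),1,0,0] 0 / (1 + L ![(1:ℝ),0,0,0] 0)) (L ![(0:ℝ),0,1,0] 3 - L ![(1:ℝ),0,0,0] 3 * L ![(0:ℝ),0,1,0] 0 / (1 + L ![(1:ℝ),0,0,0] 0)) (L ![(0:ℝ),0,0,1] 3 - L ![(1:ℝ),0,0,0] 3 * L ![(0:ℝ),0,0,1] 0 / (1 + L ![(1:ℝ),0,0,0] 0)) u‖ = ‖u‖ :=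
    fun u => auxLin_norm _ _ _ _ _ _ _ _ _ k00 k11 k22 k01 k02 k12 u
  refine ⟨((LinearIsometry.toLinearIsometryEquiv
      ⟨auxLin (L ![(0:ℝ),1,0,0] 1 - L ![(1:ℝ),0,0,0] 1 * L ![(0:ℝ),1,0,0] 0 / (1 + L ![(1:ℝ),0,0,0] 0)) (L ![(0:ℝ),0,1,0] 1 - L ![(1:ℝ),0,0,0] 1 * L ![(0:ℝ),0,1,0] 0 / (1 + L ![(1:ℝ),0,0,0] 0)) (L ![(0:ℝ),0,0,1] 1 - L ![(1:ℝ),0,0,0] 1 * L ![(0:ℝ),0,0,1] 0 / (1 + L ![(1:ℝ),0,0,0] 0)) (L ![(0:ℝ),1,0,0] 2 - L ![(1:ℝ),0,0,0] 2 * L ![(0:ℝ),1,0,0] 0 / (1 + L ![(1:ℝ),0,0,0] 0)) (L ![(0:ℝ),0,1,0] 2 - L ![(1:ℝ),0,0,0] 2 * L ![(0:ℝ),0,1,0] 0 / (1 + L ![(1:ℝ),0,0,0] 0)) (L ![(0:ℝ),0,0,1] 2 - L ![(1:ℝ),0,0,0] 2 * L ![(0:ℝ),0,0,1] 0 / (1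 + L ![(1:ℝ),0,0,0] 0)) (L ![(0:ℝ),1,0,0] 3 - L ![(1:ℝ),0,0,0] 3 * L ![(0:ℝ),1,0,0] 0 / (1 + L ![(1:ℝ),0,0,0] 0)) (L ![(0:ℝ),0,1,0] 3 - L ![(1:ℝ),0,0,0] 3 * L ![(0:ℝ),0,1,0] 0 / (1 + L ![(1:ℝ),0,0,0] 0)) (L ![(0:ℝ),0,0,1] 3 - L ![(1:ℝ),0,0,0] 3 * L ![(0:ℝ),0,0,1] 0 / (1 + L ![(1:ℝ),0,0,0] 0)), hn⟩ rfl).toIsometryEquiv).trans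
      (transIso (WithLp.toLp 2 (![2 * L ![(1:ℝ),0,0,0] 1 / (1 + L ![(1:ℝ),0,0,0] 0), 2 * L ![(1:ℝ),0,0,0] 2 / (1 + L ![(1:ℝ),0,0,0] 0), 2 * L ![(1:ℝ),0,0,0] 3 / (1 + L ![(1:ℝ),0,0,0] 0)] : Fin 3 → ℝ))), ?_⟩
  intro x hx hx0 hLx0
  have hxex := hexp x
  have hs : (0:ℝ) < x 0 + L x 0 := by linarith
  have hs' : x 0 + L x 0 ≠ 0 := ne_of_gt hs
  ext i
  fin_cases i <;>
  · simp only [phi1, phi2, transIso, auxLin, IsometryEquiv.trans_apply,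
      LinearIsometryEquiv.coe_toIsometryEquiv, LinearIsometry.coe_toLinearIsometryEquiv,
      LinearIsometry.coe_mk, LinearMap.coe_mk, AddHom.coe_mk, IsometryEquiv.coe_mk,
      Equiv.coe_fn_mk, PiLp.add_apply, Matrix.cons_val_zero, Matrix.cons_val_one,
      Matrix.head_cons, Matrix.cons_val_two, Matrix.tail_cons, Fin.isValue, PiLp.toLp_apply, Fin.zero_eta, Fin.mk_one, Fin.reduceFinMk,
      Matrix.cons_val, WithLp.ofLp_add, Pi.add_apply]
    field_simp
    simp only [hxex]
    ring
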